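/- For every sequence (εₙ)_{n≥1} of positive real numbers there exist irrational numbers s, t ∈ (0,1) such that the IFS Φ_{s,t} = {x/2, (x+1)/2, (x+s)/2, (x+1+s)/2, (x+t)/2, (x+1+t)/2} contains no exact overlap (i.e., φ_α ≠ φ_β for all distinct finite words α, β of equal length), yet Δₙ ≤ εₙ for all n ≥ 1, where Δₙ = min{|φ_α(0) − φ_β(0)| : α ≠ β ∈ {1,...,6}ⁿ}. -/

import Mathlib

open scoped BigOperators

noncomputable def phiST (s t : ℝ) (i : Fin 6) (x : ℝ) : ℝ :=
  (x + ![0, 1, s, 1 + s, t, 1 + t] i) / 2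

noncomputable def compST (s t : ℝ) (l : List (Fin 6)) : ℝ → ℝ :=
  l.foldr (fun i g => phiST s t i ∘ g) id

noncomputable def DeltaST (s t : ℝ) (n : ℕ) : ℝ :=
  sInf {r : ℝ | ∃ a b : List (Fin 6), a.length = n ∧ b.length = n ∧ a ≠ b ∧
    r = |compST s t a 0 - compST s t b 0|}

/-!
Choose `x : ℕ → ℕ` with `x k + k < x (k + 1)` and put `s = ∑ⱼ 2^(-x (2j))`,
`t = ∑ⱼ 2^(-x (2j+1))`. If `u + v s + w t = 0` with integers `u, v, w`, multiplying by `2 ^ x K`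
turns the tail of the series after index `K` into an integer of size `O(2^(-K))`, hence zero for
large `K`; so `v = w = 0` and `1, s, t` are linearly independent over `ℚ`. Since `2ⁿ φ_α(0)` is the
integer combination of `1, s, t` whose coefficients are binary numbers read off the letters of `α`,
there are no exact overlaps.

For `n ≥ 1` let `k` be least with `n ≤ x k`. Of `s` and `t`, the one having `2^(-x (k+1))` as a
term has all its earlier terms at positions `< n`, so the word `σ 0 ⋯ 0` with `φ_σ(0)` equal to half
of it, and the binary word truncating that value after `n` digits, are at most `2^(-x (k+1))` apart.
As `x (k + 1)` is chosen after `x k`, it can be taken so large that `2^(-x (k+1)) ≤ ε n` for all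
`n ≤ x k`.
-/

open Filter Finset

theorem strictMono_of_add_lt {x : ℕ → ℕ} (hx : ∀ k, x k + k < x (k + 1)) : StrictMono x :=
  strictMono_nat_of_lt_succ fun k => (Nat.le_add_right _ _).trans_lt (hx k)

theorem summable_inv_two_pow_comp {y : ℕ → ℕ} (hy : Function.Injective y) :
    Summable fun j => (2⁻¹ : ℝ) ^ y j :=
  (summable_geometric_of_lt_one (r := 2⁻¹) (by norm_num) (by norm_num)).comp_injective hy

theorem tsum_inv_two_pow_comp_le {y : ℕ → ℕ} (hy : StrictMono y) :
    ∑' j, (2⁻¹ : ℝ) ^ y j ≤ 2 * 2⁻¹ ^ y 0 := by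
  set g : ℕ → ℝ := fun n => if y 0 ≤ n then 2⁻¹ ^ n else 0
  have hg : Summable g :=
    (summable_geometric_of_lt_one (r := 2⁻¹) (by norm_num) (by norm_num)).of_nonneg_of_le
      (fun n => by positivity) (fun n => by simp only [g]; split_ifs <;> first | rfl | positivity)
  calc ∑' j, (2⁻¹ : ℝ) ^ y j = ∑' j, g (y j) := by
        simp only [g, hy.monotone (Nat.zero_le _), if_true]
    _ ≤ ∑' n, g n := tsum_comp_le_tsum_of_inj hg (fun n => by positivity) hy.injective
    _ = 2 * 2⁻¹ ^ y 0 := tsum_geometric_inv_two_ge _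

theorem abs_tsum_mul_inv_two_pow_le {y : ℕ → ℕ} (hy : StrictMono y) {c : ℕ → ℝ} {C : ℝ}
    (hc : ∀ k, |c k| ≤ C) : |∑' k, c k * 2⁻¹ ^ y k| ≤ 2 * C * 2⁻¹ ^ y 0 := by
  have hbound : HasSum (fun k => C * (2⁻¹ : ℝ) ^ y k) (C * ∑' k, (2⁻¹ : ℝ) ^ y k) :=
    (summable_inv_two_pow_comp hy.injective).hasSum.mul_left C
  calc |∑' k, c k * 2⁻¹ ^ y k| ≤ C * ∑' k, (2⁻¹ : ℝ) ^ y k :=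
        tsum_of_norm_bounded (f := fun k => c k * 2⁻¹ ^ y k) hbound fun k => by
          simpa [abs_mul] using
            mul_le_mul_of_nonneg_right (hc k) (by positivity : (0 : ℝ) ≤ 2⁻¹ ^ y k)
    _ ≤ C * (2 * 2⁻¹ ^ y 0) :=
        mul_le_mul_of_nonneg_left (tsum_inv_two_pow_comp_le hy) ((abs_nonneg _).trans (hc 0))
    _ = 2 * C * 2⁻¹ ^ y 0 := by ring

theorem exists_int_eq_two_pow_mul_sum {x : ℕ → ℕ} {s : Finset ℕ} {N : ℕ}
    (hN : ∀ k ∈ s, x k ≤ N) (c : ℕ → ℤ) :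
    ∃ n : ℤ, (2 : ℝ) ^ N * ∑ k ∈ s, (c k : ℝ) * 2⁻¹ ^ x k = n := by
  refine ⟨∑ k ∈ s, c k * 2 ^ (N - x k), ?_⟩
  push_cast
  rw [Finset.mul_sum]
  refine Finset.sum_congr rfl fun k hk => ?_
  rw [pow_sub₀ _ two_ne_zero (hN k hk), inv_pow]
  ring

theorem two_pow_mul_inv_two_pow_le {a b K : ℕ} (h : a + K ≤ b) :
    (2 : ℝ) ^ a * 2⁻¹ ^ b ≤ 2⁻¹ ^ K :=
  calc (2 : ℝ) ^ a * 2⁻¹ ^ b ≤ 2 ^ a * 2⁻¹ ^ (a + K) :=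
        mul_le_mul_of_nonneg_left (pow_le_pow_of_le_one (by norm_num) (by norm_num) h)
          (by positivity)
    _ = 2⁻¹ ^ K := by
        rw [pow_add, ← mul_assoc, ← mul_pow, mul_inv_cancel₀ two_ne_zero, one_pow, one_mul]

theorem abs_two_pow_mul_tsum_tail_le {x : ℕ → ℕ} (hx : ∀ k, x k + k < x (k + 1))
    {c : ℕ → ℝ} {C : ℝ} (hc : ∀ k, |c k| ≤ C) (K : ℕ) :
    |(2 : ℝ) ^ x K * ∑' k, c (k + (K + 1)) * 2⁻¹ ^ x (k + (K + 1))| ≤ 2 * C * 2⁻¹ ^ K := by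
  have hxmono := strictMono_of_add_lt hx
  have htail := abs_tsum_mul_inv_two_pow_le (y := fun k => x (k + (K + 1)))
    (hxmono.comp (strictMono_id.add_const _)) (fun k => hc (k + (K + 1)))
  rw [zero_add] at htail
  calc _ = 2 ^ x K * |∑' k, c (k + (K + 1)) * 2⁻¹ ^ x (k + (K + 1))| := by
        rw [abs_mul, abs_of_pos (by positivity : (0 : ℝ) < 2 ^ x K)]
    _ ≤ 2 ^ x K * (2 * C * 2⁻¹ ^ x (K + 1)) := by gcongr
    _ = 2 * C * (2 ^ x K * 2⁻¹ ^ x (K + 1)) := by ring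
    _ ≤ 2 * C * 2⁻¹ ^ K := by
        have hC : 0 ≤ C := (abs_nonneg _).trans (hc 0)
        gcongr
        exact two_pow_mul_inv_two_pow_le (by have := hx K; omega)

theorem eventually_eq_zero_of_hasSum_int {x : ℕ → ℕ} (hx : ∀ k, x k + k < x (k + 1))
    {c : ℕ → ℤ} {C : ℝ} (hc : ∀ k, |(c k : ℝ)| ≤ C) {m : ℤ}
    (h : HasSum (fun k => (c k : ℝ) * 2⁻¹ ^ x k) m) : ∀ᶠ k in atTop, c k = 0 := by
  have hxmono := strictMono_of_add_lt hx
  set a : ℕ → ℝ := fun k => (c k : ℝ) * 2⁻¹ ^ x k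
  set T : ℕ → ℝ := fun K => ∑' k, a (k + K)
  have hT_succ (K : ℕ) : T K = a K + T (K + 1) := by
    simp only [T]
    rw [((summable_nat_add_iff K).2 h.summable).tsum_eq_zero_add, zero_add]
    simp only [add_assoc, add_comm 1 K]
  -- `2 ^ x K * T (K + 1)` is an integer, since the partial sum up to `K` lies in `2⁻¹ ^ x K • ℤ`.
  have hT_int (K : ℕ) : ∃ n : ℤ, (2 : ℝ) ^ x K * T (K + 1) = n := by
    obtain ⟨n, hn⟩ := exists_int_eq_two_pow_mul_sum (s := range (K + 1)) (N := x K)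
      (fun k hk => hxmono.monotone (Nat.lt_succ_iff.1 (mem_range.1 hk))) c
    refine ⟨m * 2 ^ x K - n, ?_⟩
    have hsplit := (h.summable.sum_add_tsum_nat_add (K + 1)).trans h.tsum_eq
    push_cast
    rw [← hn, ← hsplit]
    ring
  have hsmall : ∀ᶠ K in atTop, 2 * C * (2⁻¹ : ℝ) ^ K < 1 := by
    have := (tendsto_pow_atTop_nhds_zero_of_lt_one (r := (2⁻¹ : ℝ)) (by norm_num)
      (by norm_num)).const_mul (2 * C)
    rw [mul_zero] at this
    exact this.eventually (gt_mem_nhds one_pos)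
  have hT_zero : ∀ᶠ K in atTop, T (K + 1) = 0 := hsmall.mono fun K hK => by
    obtain ⟨n, hn⟩ := hT_int K
    have hn0 : n = 0 := Int.abs_lt_one_iff.1 <| by
      exact_mod_cast hn ▸ (abs_two_pow_mul_tsum_tail_le hx hc K).trans_lt hK
    simpa [hn0] using hn
  obtain ⟨N, hN⟩ := eventually_atTop.1 hT_zero
  refine eventually_atTop.2 ⟨N + 1, fun k hk => ?_⟩
  obtain ⟨K, rfl⟩ : ∃ K, k = K + 1 := ⟨k - 1, by omega⟩
  have : a (K + 1) = 0 := by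
    linarith [hT_succ (K + 1), hN K (by omega), hN (K + 1) (by omega)]
  simpa [a] using this

theorem int_eq_zero_of_lacunary {x : ℕ → ℕ} (hx : ∀ k, x k + k < x (k + 1)) {u v w : ℤ}
    (h : (u : ℝ) + v * ∑' j, (2⁻¹ : ℝ) ^ x (2 * j) + w * ∑' j, (2⁻¹ : ℝ) ^ x (2 * j + 1) = 0) :
    u = 0 ∧ v = 0 ∧ w = 0 := by
  have hxmono := strictMono_of_add_lt hx
  set c : ℕ → ℤ := fun k => if Even k then v else w
  have hsum : HasSum (fun k => (c k : ℝ) * 2⁻¹ ^ x k) ((-u : ℤ) : ℝ) := by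
    have he := (summable_inv_two_pow_comp
      (hxmono.injective.comp (mul_right_injective₀ two_ne_zero))).hasSum.mul_left (v : ℝ)
    have ho := (summable_inv_two_pow_comp (hxmono.injective.comp
      ((add_left_injective 1).comp (mul_right_injective₀ two_ne_zero)))).hasSum.mul_left (w : ℝ)
    rw [show ((-u : ℤ) : ℝ)
        = v * ∑' j, (2⁻¹ : ℝ) ^ x (2 * j) + w * ∑' j, (2⁻¹ : ℝ) ^ x (2 * j + 1) by
      push_cast; linarith]
    refine HasSum.even_add_odd ?_ ?_
    · simpa [c] using he
    · simpa [c, Nat.even_add_one] using ho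
  have hc : ∀ k, |(c k : ℝ)| ≤ |(v : ℝ)| + |(w : ℝ)| := fun k => by
    simp only [c]; split_ifs <;> simp
  obtain ⟨N, hN⟩ := eventually_atTop.1 (eventually_eq_zero_of_hasSum_int hx hc hsum)
  have hv : v = 0 := by simpa [c] using hN (2 * N) (by omega)
  have hw : w = 0 := by simpa [c, Nat.even_add_one] using hN (2 * N + 1) (by omega)
  subst hv hw
  exact ⟨by simpa using h, rfl, rfl⟩

theorem irrational_of_int_add_int_mul_eq_zero {r : ℝ}
    (h : ∀ u v : ℤ, (u : ℝ) + v * r = 0 → v = 0) : Irrational r := by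
  rintro ⟨q, rfl⟩
  have hden := h (-q.num) q.den (by rw [Rat.cast_def]; push_cast; field_simp; ring)
  exact q.den_ne_zero (by exact_mod_cast hden)

def digitOne : Fin 6 → ℕ := ![0, 1, 0, 1, 0, 1]
def digitS : Fin 6 → ℕ := ![0, 0, 1, 1, 0, 0]
def digitT : Fin 6 → ℕ := ![0, 0, 0, 0, 1, 1]

theorem translation_eq (s t : ℝ) (i : Fin 6) :
    (![0, 1, s, 1 + s, t, 1 + t] : Fin 6 → ℝ) i = digitOne i + digitS i * s + digitT i * t := by
  fin_cases i <;> simp [digitOne, digitS, digitT]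

-- The first letter of a word is its most significant binary digit.
def wordValue (d : Fin 6 → ℕ) (l : List (Fin 6)) : ℕ :=
  Nat.ofDigits 2 (l.map d).reverse

theorem wordValue_cons (d : Fin 6 → ℕ) (i : Fin 6) (l : List (Fin 6)) :
    wordValue d (i :: l) = wordValue d l + 2 ^ l.length * d i := by
  simp [wordValue, Nat.ofDigits_append, Nat.ofDigits_singleton]

theorem compST_cons (s t : ℝ) (i : Fin 6) (l : List (Fin 6)) (y : ℝ) :
    compST s t (i :: l) y = phiST s t i (compST s t l y) := rfl

theorem two_pow_length_mul_compST (s t : ℝ) (l : List (Fin 6)) :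
    2 ^ l.length * compST s t l 0
      = wordValue digitOne l + wordValue digitS l * s + wordValue digitT l * t := by
  induction l with
  | nil => simp [compST, wordValue]
  | cons i l ih =>
    rw [compST_cons, phiST, translation_eq, wordValue_cons, wordValue_cons, wordValue_cons,
      List.length_cons, pow_succ]
    push_cast
    linear_combination ih

theorem map_eq_of_wordValue_eq {d : Fin 6 → ℕ} (hd : ∀ i, d i < 2) {a b : List (Fin 6)}
    (hlen : a.length = b.length) (h : wordValue d a = wordValue d b) : a.map d = b.map d := by
  have hdigits (l : List (Fin 6)) : ∀ e ∈ (l.map d).reverse, e < 2 := by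
    simp only [List.mem_reverse, List.mem_map]
    rintro _ ⟨i, -, rfl⟩
    exact hd i
  exact List.reverse_inj.1 <| Nat.ofDigits_inj_of_len_eq one_lt_two (by simp [hlen])
    (hdigits a) (hdigits b) h

theorem eq_of_wordValue_eq {a b : List (Fin 6)} (hlen : a.length = b.length)
    (hone : wordValue digitOne a = wordValue digitOne b)
    (hs : wordValue digitS a = wordValue digitS b) (ht : wordValue digitT a = wordValue digitT b) :
    a = b := by
  have hinj : Function.Injective fun i => (digitOne i, digitS i, digitT i) := by decide
  refine List.map_injective_iff.2 hinj ?_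
  rw [← List.zip_map', ← List.zip_map', ← List.zip_map', ← List.zip_map',
    map_eq_of_wordValue_eq (by decide) hlen hone, map_eq_of_wordValue_eq (by decide) hlen hs,
    map_eq_of_wordValue_eq (by decide) hlen ht]

theorem eq_of_compST_zero_eq {s t : ℝ}
    (hst : ∀ u v w : ℤ, (u : ℝ) + v * s + w * t = 0 → u = 0 ∧ v = 0 ∧ w = 0)
    {a b : List (Fin 6)} (hlen : a.length = b.length) (h : compST s t a 0 = compST s t b 0) :
    a = b := by
  have ha := two_pow_length_mul_compST s t a
  have hb := two_pow_length_mul_compST s t b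
  rw [hlen, h, hb] at ha
  obtain ⟨hone, hs, ht⟩ := hst (wordValue digitOne a - wordValue digitOne b)
    (wordValue digitS a - wordValue digitS b) (wordValue digitT a - wordValue digitT b)
    (by push_cast; linarith)
  exact eq_of_wordValue_eq hlen (by omega) (by omega) (by omega)

theorem DeltaST_le_abs_sub {s t : ℝ} {n : ℕ} {a b : List (Fin 6)} (ha : a.length = n)
    (hb : b.length = n) (hab : a ≠ b) : DeltaST s t n ≤ |compST s t a 0 - compST s t b 0| :=
  csInf_le ⟨0, by rintro _ ⟨_, _, _, _, _, rfl⟩; exact abs_nonneg _⟩ ⟨a, b, ha, hb, hab, rfl⟩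

theorem compST_replicate_zero (s t : ℝ) (m : ℕ) : compST s t (List.replicate m 0) 0 = 0 := by
  induction m with
  | zero => rfl
  | succ m ih => simp [List.replicate_succ, compST_cons, ih, phiST]

theorem compST_ofFn_zero (s t : ℝ) {n : ℕ} (g : Fin n → Fin 6) :
    compST s t (List.ofFn g) 0
      = ∑ k : Fin n, 2⁻¹ ^ (k.val + 1) * ![0, 1, s, 1 + s, t, 1 + t] (g k) := by
  induction n with
  | zero => rfl
  | succ n ih =>
    rw [List.ofFn_succ, compST_cons, ih, Fin.sum_univ_succ, phiST, div_eq_mul_inv, add_mul,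
      Finset.sum_mul, add_comm]
    simp only [Fin.val_zero, Fin.val_succ]
    congr 1
    · ring
    · exact Finset.sum_congr rfl fun k _ => by ring

theorem compST_ofFn_indicator (s t : ℝ) {n : ℕ} {S : Finset ℕ} (hS : ∀ k ∈ S, k < n) :
    compST s t (List.ofFn fun k : Fin n => if (k : ℕ) ∈ S then (1 : Fin 6) else 0) 0
      = ∑ k ∈ S, 2⁻¹ ^ (k + 1) := by
  rw [compST_ofFn_zero]
  have hsum := Fin.sum_univ_eq_sum_range (fun k => if k ∈ S then (2⁻¹ : ℝ) ^ (k + 1) else 0) n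
  simp only [apply_ite (fun i => (![0, 1, s, 1 + s, t, 1 + t] : Fin 6 → ℝ) i),
    Matrix.cons_val_one, Matrix.cons_val_zero, mul_ite, mul_one, mul_zero]
  rw [hsum, sum_ite_mem, inter_eq_right.2 fun k hk => mem_range.2 (hS k hk)]

theorem DeltaST_le_of_translation_eq_tsum {s t : ℝ} {σ : Fin 6} {y : ℕ → ℕ} (hy : StrictMono y)
    (hσ : (![0, 1, s, 1 + s, t, 1 + t] : Fin 6 → ℝ) σ = ∑' j, (2⁻¹ : ℝ) ^ y j) {n J : ℕ}
    (hn : 1 ≤ n) (hJ : ∀ j < J, y j < n) : DeltaST s t n ≤ 2⁻¹ ^ y J := by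
  set a := σ :: List.replicate (n - 1) 0
  set b := List.ofFn fun k : Fin n => if (k : ℕ) ∈ (range J).image y then (1 : Fin 6) else 0
  have hsum := summable_inv_two_pow_comp hy.injective
  have hdiff : compST s t a 0 - compST s t b 0 = 2⁻¹ * ∑' j, (2⁻¹ : ℝ) ^ y (j + J) := by
    rw [compST_cons, compST_replicate_zero, phiST, hσ, compST_ofFn_indicator,
      sum_image hy.injective.injOn, ← hsum.sum_add_tsum_nat_add J]
    · simp only [pow_succ, ← sum_mul]; ring
    · simpa using hJ
  have htail_pos : 0 < ∑' j, (2⁻¹ : ℝ) ^ y (j + J) :=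
    ((summable_nat_add_iff J).2 hsum).tsum_pos (fun _ => by positivity) 0 (by positivity)
  have htail_le : ∑' j, (2⁻¹ : ℝ) ^ y (j + J) ≤ 2 * 2⁻¹ ^ y J := by
    simpa using tsum_inv_two_pow_comp_le (y := fun j => y (j + J))
      (hy.comp (strictMono_id.add_const J))
  have hab : a ≠ b := fun hab => by rw [hab, sub_self] at hdiff; linarith
  calc DeltaST s t n ≤ |compST s t a 0 - compST s t b 0| :=
        DeltaST_le_abs_sub (by simp [a]; omega) (by simp [b]) hab
    _ ≤ 2⁻¹ ^ y J := by rw [hdiff, abs_of_pos (by positivity)]; linarith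

theorem tsum_inv_two_pow_comp_mem_Ioo {y : ℕ → ℕ} (hy : StrictMono y) (hy0 : 2 ≤ y 0) :
    ∑' j, (2⁻¹ : ℝ) ^ y j ∈ Set.Ioo 0 1 := by
  refine ⟨(summable_inv_two_pow_comp hy.injective).tsum_pos (fun _ => by positivity) 0
    (by positivity), (tsum_inv_two_pow_comp_le hy).trans_lt ?_⟩
  calc (2 : ℝ) * 2⁻¹ ^ y 0 ≤ 2 * 2⁻¹ ^ 2 :=
        mul_le_mul_of_nonneg_left (pow_le_pow_of_le_one (by norm_num) (by norm_num) hy0)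
          two_pos.le
    _ < 1 := by norm_num

theorem DeltaST_le_of_lacunary {x : ℕ → ℕ} (hx : StrictMono x) {n k : ℕ} (hn : 1 ≤ n)
    (hk : ∀ i < k, x i < n) :
    DeltaST (∑' j, (2⁻¹ : ℝ) ^ x (2 * j)) (∑' j, (2⁻¹ : ℝ) ^ x (2 * j + 1)) n
      ≤ 2⁻¹ ^ x (k + 1) := by
  rcases Nat.even_or_odd' (k + 1) with ⟨J, hJ | hJ⟩ <;> rw [hJ]
  · exact DeltaST_le_of_translation_eq_tsum (σ := 2)
      (hx.comp (strictMono_mul_left_of_pos two_pos)) rfl hn fun j hj => hk (2 * j) (by omega)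
  · exact DeltaST_le_of_translation_eq_tsum (σ := 4)
      (hx.comp ((strictMono_id.add_const 1).comp (strictMono_mul_left_of_pos two_pos))) rfl hn
      fun j hj => hk (2 * j + 1) (by omega)

theorem exists_lacunary_seq (ε : ℕ → ℝ) (hε : ∀ n, 1 ≤ n → 0 < ε n) :
    ∃ x : ℕ → ℕ, x 0 = 2 ∧ (∀ k, x k + k < x (k + 1)) ∧
      ∀ k n, 1 ≤ n → n ≤ x k → (2⁻¹ : ℝ) ^ x (k + 1) ≤ ε n := by
  have hstep (k m : ℕ) : ∃ M, m + k < M ∧ ∀ n, 1 ≤ n → n ≤ m → (2⁻¹ : ℝ) ^ M ≤ ε n := by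
    have hsmall : ∀ᶠ M in atTop, ∀ n ∈ Icc 1 m, (2⁻¹ : ℝ) ^ M ≤ ε n :=
      (eventually_all_finset _).2 fun n hn =>
        (tendsto_pow_atTop_nhds_zero_of_lt_one (by norm_num) (by norm_num)).eventually
          (ge_mem_nhds (hε n (mem_Icc.1 hn).1))
    obtain ⟨M, hM, hMk⟩ := (hsmall.and (eventually_gt_atTop (m + k))).exists
    exact ⟨M, hMk, fun n h1 h2 => hM n (mem_Icc.2 ⟨h1, h2⟩)⟩
  choose F hF using hstep
  exact ⟨fun k => Nat.rec 2 F k, rfl, fun k => (hF k _).1, fun k => (hF k _).2⟩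

theorem stmt8 (ε : ℕ → ℝ) (hε : ∀ n, 1 ≤ n → 0 < ε n) :
    ∃ s t : ℝ, s ∈ Set.Ioo (0:ℝ) 1 ∧ t ∈ Set.Ioo (0:ℝ) 1 ∧
      Irrational s ∧ Irrational t ∧
      (∀ n : ℕ, ∀ a b : List (Fin 6), a.length = n → b.length = n → a ≠ b →
        compST s t a ≠ compST s t b) ∧
      ∀ n, 1 ≤ n → DeltaST s t n ≤ ε n := by
  obtain ⟨x, hx0, hgap, hcover⟩ := exists_lacunary_seq ε hε
  have hx := strictMono_of_add_lt hgap
  have hindep (u v w : ℤ) (h : (u : ℝ) + v * ∑' j, (2⁻¹ : ℝ) ^ x (2 * j)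
      + w * ∑' j, (2⁻¹ : ℝ) ^ x (2 * j + 1) = 0) : u = 0 ∧ v = 0 ∧ w = 0 :=
    int_eq_zero_of_lacunary hgap h
  refine ⟨_, _, tsum_inv_two_pow_comp_mem_Ioo (hx.comp (strictMono_mul_left_of_pos two_pos))
      (by simp [hx0]),
    tsum_inv_two_pow_comp_mem_Ioo
      (hx.comp ((strictMono_id.add_const 1).comp (strictMono_mul_left_of_pos two_pos)))
      (by simpa [hx0] using hx.monotone (Nat.zero_le 1)),
    irrational_of_int_add_int_mul_eq_zero fun u v h => (hindep u v 0 (by simpa using h)).2.1,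
    irrational_of_int_add_int_mul_eq_zero fun u v h => (hindep u 0 v (by simpa using h)).2.2,
    fun n a b ha hb hab h =>
      hab (eq_of_compST_zero_eq hindep (ha.trans hb.symm) (congrFun h 0)),
    fun n hn => ?_⟩
  have hex : ∃ k, n ≤ x k := ⟨n, hx.id_le n⟩
  calc _ ≤ (2⁻¹ : ℝ) ^ x (Nat.find hex + 1) :=
        DeltaST_le_of_lacunary hx hn fun i hi => not_le.1 (Nat.find_min hex hi)
    _ ≤ ε n := hcover _ n hn (Nat.find_spec hex)
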